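/- For k ≥ 2, the sum ∑ log p over triples (p, r, m) with p prime, r ≥ 2, m ≥ 1 and p^r·m^k ≤ x satisfies the bound O(x^{1/2} log x) for k = 2 and O(x^{1/2}) for k ≥ 3. -/

import Mathlib

/-!
Group the triples by `m`. For fixed `m` the pairs `(p, r)` give distinct proper prime powers
`p ^ r ≤ x / m ^ k`, each weighted by `log p = Λ (p ^ r)`, so their contribution is at most
`ψ (x / m ^ k) - θ (x / m ^ k) = O(√(x / m ^ k))`. Summing over `m ≤ x` leaves
`√x * ∑ m⁻¹ ^ (k / 2)`, a harmonic sum `O(log x)` for `k = 2` and bounded for `k ≥ 3`.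
-/

open Filter Asymptotics Finset Chebyshev Real
open ArithmeticFunction hiding log

theorem Chebyshev.sum_log_prime_pow_le_psi_sub_theta {s : Finset (ℕ × ℕ)} {y : ℝ}
    (hs : ∀ q ∈ s, q.1.Prime ∧ 2 ≤ q.2 ∧ ((q.1 ^ q.2 : ℕ) : ℝ) ≤ y) :
    ∑ q ∈ s, log q.1 ≤ ψ y - θ y := by
  have hinj : Set.InjOn (fun q : ℕ × ℕ => q.1 ^ q.2) s := fun q hq q' hq' h =>
    have ⟨hp, hr, _⟩ := hs q hq
    have ⟨hp', hr', _⟩ := hs q' hq'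
    have ⟨h1, h2⟩ := hp.pow_inj' hp' (by omega) (by omega) h
    Prod.ext h1 h2
  have hsub : s.image (fun q => q.1 ^ q.2) ⊆ {n ∈ Ioc 0 ⌊y⌋₊ | ¬n.Prime} := by
    simp only [subset_iff, mem_image, mem_filter, mem_Ioc]
    rintro _ ⟨q, hq, rfl⟩
    obtain ⟨hp, hr, hle⟩ := hs q hq
    exact ⟨⟨pow_pos hp.pos _, Nat.le_floor hle⟩, Nat.Prime.not_prime_pow hr⟩
  rw [psi_sub_theta_eq_sum_not_prime]
  calc ∑ q ∈ s, log q.1 = ∑ q ∈ s, Λ (q.1 ^ q.2) := sum_congr rfl fun q hq => by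
        have ⟨hp, hr, _⟩ := hs q hq
        rw [vonMangoldt_apply_pow (by omega), vonMangoldt_apply_prime hp]
    _ = ∑ n ∈ s.image (fun q => q.1 ^ q.2), Λ n := (sum_image hinj).symm
    _ ≤ _ := sum_le_sum_of_subset_of_nonneg hsub fun _ _ _ => vonMangoldt_nonneg

noncomputable def primePowerTriples (k : ℕ) (x : ℝ) : Finset (ℕ × ℕ × ℕ) :=
  (Finset.Icc 1 ⌊x⌋₊ ×ˢ Finset.Icc 1 ⌊x⌋₊ ×ˢ Finset.Icc 1 ⌊x⌋₊).filter
    (fun t : ℕ × ℕ × ℕ => t.1.Prime ∧ 2 ≤ t.2.1 ∧ 1 ≤ t.2.2 ∧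
      ((t.1 ^ t.2.1 * t.2.2 ^ k : ℕ) : ℝ) ≤ x)

theorem sum_log_primePowerTriples_le (k : ℕ) (x : ℝ) :
    ∑ t ∈ primePowerTriples k x, log t.1 ≤
      ∑ m ∈ Icc 1 ⌊x⌋₊, (ψ (x / m ^ k) - θ (x / m ^ k)) := by
  have hmaps : ∀ t ∈ primePowerTriples k x, t.2.2 ∈ Icc 1 ⌊x⌋₊ := fun t ht =>
    (mem_product.1 (mem_product.1 (mem_filter.1 ht).1).2).2
  rw [← sum_fiberwise_of_maps_to hmaps]
  gcongr with m hm
  have hinj : Set.InjOn (fun t : ℕ × ℕ × ℕ => (t.1, t.2.1))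
      ({t ∈ primePowerTriples k x | t.2.2 = m} : Finset _) := by
    intro t ht t' ht' h
    simp only [coe_filter, Set.mem_ofPred_eq, Prod.mk.injEq] at ht ht' h
    exact Prod.ext h.1 (Prod.ext h.2 (ht.2.trans ht'.2.symm))
  refine (sum_image (f := fun q : ℕ × ℕ => log q.1) hinj).symm.trans_le
    (sum_log_prime_pow_le_psi_sub_theta ?_)
  simp only [mem_image, mem_filter, primePowerTriples]
  rintro _ ⟨t, ⟨⟨-, hp, hr, -, hle⟩, rfl⟩, rfl⟩
  have hm : (0 : ℝ) < (t.2.2 : ℝ) ^ k := pow_pos (Nat.cast_pos.2 (mem_Icc.1 hm).1) k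
  refine ⟨hp, hr, ?_⟩
  rw [le_div_iff₀ hm]
  exact_mod_cast hle

theorem sum_log_primePowerTriples_isBigO (k : ℕ) :
    (fun x => ∑ t ∈ primePowerTriples k x, log t.1) =O[atTop]
      fun x => √x * ∑ m ∈ Icc 1 ⌊x⌋₊, ((m : ℝ) ^ ((k : ℝ) / 2))⁻¹ := by
  obtain ⟨C, hC⟩ := psi_sub_theta_le_mul_sqrt
  refine IsBigO.of_bound C (Eventually.of_forall fun x => ?_)
  have hsqrt (m : ℕ) : √(x / m ^ k) = √x * ((m : ℝ) ^ ((k : ℝ) / 2))⁻¹ := by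
    rw [sqrt_div' x (by positivity), sqrt_eq_rpow (_ ^ k), ← rpow_natCast,
      ← rpow_mul m.cast_nonneg, div_eq_mul_inv]
    ring_nf
  rw [norm_of_nonneg (sum_nonneg fun t _ => log_natCast_nonneg _),
    norm_of_nonneg (by positivity)]
  calc ∑ t ∈ primePowerTriples k x, log t.1
      ≤ ∑ m ∈ Icc 1 ⌊x⌋₊, (ψ (x / m ^ k) - θ (x / m ^ k)) := sum_log_primePowerTriples_le k x
    _ ≤ ∑ m ∈ Icc 1 ⌊x⌋₊, C * √(x / m ^ k) := sum_le_sum fun m _ => hC _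
    _ = C * (√x * ∑ m ∈ Icc 1 ⌊x⌋₊, ((m : ℝ) ^ ((k : ℝ) / 2))⁻¹) := by
      simp only [hsqrt, mul_sum]

theorem sum_Icc_floor_inv_isBigO_log :
    (fun x : ℝ => ∑ m ∈ Icc 1 ⌊x⌋₊, (m : ℝ)⁻¹) =O[atTop] log := by
  refine IsBigO.of_bound 2 ((eventually_ge_atTop (exp 1)).mono fun x hx => ?_)
  have hx1 : 1 ≤ x := (one_le_exp zero_le_one).trans hx
  have hlog : 1 ≤ log x := (le_log_iff_exp_le (by linarith)).2 hx
  rw [norm_of_nonneg (sum_nonneg fun m _ => by positivity), norm_of_nonneg (by linarith)]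
  calc ∑ m ∈ Icc 1 ⌊x⌋₊, (m : ℝ)⁻¹ = harmonic ⌊x⌋₊ := by simp [harmonic_eq_sum_Icc]
    _ ≤ 1 + log x := harmonic_floor_le_one_add_log x hx1
    _ ≤ 2 * log x := by linarith

theorem sum_Icc_floor_inv_rpow_isBigO_one {s : ℝ} (hs : 1 < s) :
    (fun x : ℝ => ∑ m ∈ Icc 1 ⌊x⌋₊, ((m : ℝ) ^ s)⁻¹) =O[atTop] fun _ => (1 : ℝ) := by
  refine IsBigO.of_bound (∑' m : ℕ, ((m : ℝ) ^ s)⁻¹) (Eventually.of_forall fun x => ?_)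
  rw [norm_of_nonneg (sum_nonneg fun m _ => by positivity), norm_one, mul_one]
  exact (summable_nat_rpow_inv.2 hs).sum_le_tsum _ fun m _ => by positivity

theorem sum_log_prime_power_isBigO_general (k : ℕ) :
    (k = 2 →
      (fun x : ℝ =>
          ∑ t ∈ ((Finset.Icc 1 ⌊x⌋₊ ×ˢ Finset.Icc 1 ⌊x⌋₊ ×ˢ Finset.Icc 1 ⌊x⌋₊).filter
            (fun t : ℕ × ℕ × ℕ => t.1.Prime ∧ 2 ≤ t.2.1 ∧ 1 ≤ t.2.2 ∧
              ((t.1 ^ t.2.1 * t.2.2 ^ k : ℕ) : ℝ) ≤ x)),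
            Real.log t.1)
        =O[atTop] fun x : ℝ => x ^ ((1:ℝ)/2) * Real.log x) ∧
    (3 ≤ k →
      (fun x : ℝ =>
          ∑ t ∈ ((Finset.Icc 1 ⌊x⌋₊ ×ˢ Finset.Icc 1 ⌊x⌋₊ ×ˢ Finset.Icc 1 ⌊x⌋₊).filter
            (fun t : ℕ × ℕ × ℕ => t.1.Prime ∧ 2 ≤ t.2.1 ∧ 1 ≤ t.2.2 ∧
              ((t.1 ^ t.2.1 * t.2.2 ^ k : ℕ) : ℝ) ≤ x)),
            Real.log t.1)
        =O[atTop] fun x : ℝ => x ^ ((1:ℝ)/2)) := by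
  simp_rw [← sqrt_eq_rpow]
  refine ⟨?_, fun hk => ?_⟩
  · rintro rfl
    have hexp : ((2 : ℕ) : ℝ) / 2 = 1 := by norm_num
    have h := sum_log_primePowerTriples_isBigO 2
    simp only [hexp, rpow_one] at h
    exact h.trans ((isBigO_refl sqrt atTop).mul sum_Icc_floor_inv_isBigO_log)
  · have hexp : 1 < (k : ℝ) / 2 := by
      rw [lt_div_iff₀ two_pos]
      exact_mod_cast hk
    exact (sum_log_primePowerTriples_isBigO k).trans <| by
      simpa only [mul_one] using
        (isBigO_refl sqrt atTop).mul (sum_Icc_floor_inv_rpow_isBigO_one hexp)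

/-- For `k ≥ 2`, the sum of `log p` over triples `(p, r, m)` with `p` prime,
`r ≥ 2`, `m ≥ 1` and `p^r m^k ≤ x` is `O(x^{1/2} log x)` for `k = 2` and
`O(x^{1/2})` for `k ≥ 3`. -/
theorem sum_log_prime_power_isBigO (k : ℕ) (hk : 2 ≤ k) :
    (k = 2 →
      (fun x : ℝ =>
          ∑ t ∈ ((Finset.Icc 1 ⌊x⌋₊ ×ˢ Finset.Icc 1 ⌊x⌋₊ ×ˢ Finset.Icc 1 ⌊x⌋₊).filter
            (fun t : ℕ × ℕ × ℕ => t.1.Prime ∧ 2 ≤ t.2.1 ∧ 1 ≤ t.2.2 ∧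
              ((t.1 ^ t.2.1 * t.2.2 ^ k : ℕ) : ℝ) ≤ x)),
            Real.log t.1)
        =O[atTop] fun x : ℝ => x ^ ((1:ℝ)/2) * Real.log x) ∧
    (3 ≤ k →
      (fun x : ℝ =>
          ∑ t ∈ ((Finset.Icc 1 ⌊x⌋₊ ×ˢ Finset.Icc 1 ⌊x⌋₊ ×ˢ Finset.Icc 1 ⌊x⌋₊).filter
            (fun t : ℕ × ℕ × ℕ => t.1.Prime ∧ 2 ≤ t.2.1 ∧ 1 ≤ t.2.2 ∧
              ((t.1 ^ t.2.1 * t.2.2 ^ k : ℕ) : ℝ) ≤ x)),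
            Real.log t.1)
        =O[atTop] fun x : ℝ => x ^ ((1:ℝ)/2)) :=
  sum_log_prime_power_isBigO_general k
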